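/- arXiv:1511.03869 — 10 statements merged into one kernel-verified Lean document; each statement's English description precedes it below -/
import Mathlib

section
/- For every real number a with 3 < a ≤ 3.7, the quantity q(a) = 3a - 9 - (a-1)(a-2)·log(1 + 1/(a-2)) is strictly negative. -/
/-! Put `t = a - 2 ∈ (1, 1.7]`, so that the claim reads `3t - 3 < t (t + 1) log (1 + 1/t)`.
Truncating the series `log (1 + 1/t) = 2 ∑ (2t + 1)^{-(2k+1)} / (2k + 1)` after two terms
(one is not enough near `t = 1.7`) reduces it, with `u = 2t + 1 ∈ (3, 4.4]`, to the polynomial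
inequality `6u⁴ - 27u³ + 2u² + 1 < 0`. -/

open Real

lemma two_div_add_two_div_le_log_one_add_inv {t : ℝ} (ht : 0 < t) :
    2 / (2 * t + 1) + 2 / (3 * (2 * t + 1) ^ 3) ≤ log (1 + t⁻¹) := by
  refine le_of_eq_of_le ?_
    (sum_le_hasSum (Finset.range 2) (fun k _ => by positivity) (hasSum_log_one_add_inv ht))
  norm_num [Finset.sum_range_succ, div_eq_mul_inv, mul_pow]
  ring

lemma sub_lt_mul_two_div_add_two_div {t : ℝ} (h1 : 1 < t) (h2 : t ≤ 1.7) :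
    3 * t - 3 < t * (t + 1) * (2 / (2 * t + 1) + 2 / (3 * (2 * t + 1) ^ 3)) := by
  have hu : 0 < 2 * t + 1 := by linarith
  rw [div_add_div _ _ hu.ne' (by positivity), mul_div_assoc', lt_div_iff₀ (by positivity)]
  nlinarith [mul_nonneg (mul_nonneg (sub_nonneg.mpr h2) (sub_nonneg.mpr h1.le)) (sq_nonneg (2 * t + 1)),
    mul_pos hu hu]

theorem q_neg (a : ℝ) (h1 : 3 < a) (h2 : a ≤ 3.7) :
    3 * a - 9 - (a - 1) * (a - 2) * Real.log (1 + 1 / (a - 2)) < 0 := by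
  obtain ⟨t, rfl⟩ : ∃ t, a = t + 2 := ⟨a - 2, by ring⟩
  have ht1 : 1 < t := by linarith
  have ht2 : t ≤ 1.7 := by norm_num at h2 ⊢; linarith
  have hlog := two_div_add_two_div_le_log_one_add_inv (by linarith : 0 < t)
  have hpoly := sub_lt_mul_two_div_add_two_div ht1 ht2
  have hmul := mul_le_mul_of_nonneg_left hlog (by positivity : 0 ≤ t * (t + 1))
  rw [add_sub_cancel_right, one_div]
  linarith
end

section
/- The function q(a) = 3a - 9 - (a-1)(a-2)·log(1 + 1/(a-2)) has strictly positive derivative for all a in the interval (3, 3.7]. -/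
/-! Differentiating gives `q'(a) = 4 - (2a - 3) log (1 + 1/(a - 2))`, and `log (1 + x) ≤ x` bounds
the subtracted term by `(2a - 3)/(a - 2) = 2 + 1/(a - 2) < 3` as soon as `a > 3`. -/

open Real

noncomputable def q (x : ℝ) : ℝ := 3 * x - 9 - (x - 1) * (x - 2) * log (1 + 1 / (x - 2))

theorem hasDerivAt_q {a : ℝ} (ha1 : a ≠ 1) (ha2 : a ≠ 2) :
    HasDerivAt q (4 - (2 * a - 3) * log (1 + 1 / (a - 2))) a := by
  have hsub1 : a - 1 ≠ 0 := sub_ne_zero.mpr ha1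
  have hsub2 : a - 2 ≠ 0 := sub_ne_zero.mpr ha2
  have hone_add : 1 + 1 / (a - 2) = (a - 1) / (a - 2) := by field_simp; ring
  have harg : 1 + 1 / (a - 2) ≠ 0 := hone_add ▸ div_ne_zero hsub1 hsub2
  have hinner : HasDerivAt (fun x : ℝ => 1 + 1 / (x - 2)) (-1 / (a - 2) ^ 2) a := by
    simpa [one_div] using (((hasDerivAt_id a).sub_const 2).inv hsub2).const_add 1
  have hpoly : HasDerivAt (fun x : ℝ => (x - 1) * (x - 2)) (1 * (a - 2) + (a - 1) * 1) a :=
    ((hasDerivAt_id a).sub_const 1).mul ((hasDerivAt_id a).sub_const 2)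
  have hlin : HasDerivAt (fun x : ℝ => 3 * x - 9) 3 a := by
    simpa using ((hasDerivAt_id a).const_mul 3).sub_const 9
  refine (hlin.sub (hpoly.mul (hinner.log harg))).congr_deriv ?_
  have hlogterm : (a - 1) * (a - 2) * (-1 / (a - 2) ^ 2 / (1 + 1 / (a - 2))) = -1 := by
    rw [hone_add]
    field_simp
  rw [hlogterm]
  ring

theorem mul_log_one_add_inv_le {t : ℝ} (ht : 0 < t) :
    (2 * t + 1) * log (1 + 1 / t) ≤ 2 + 1 / t :=
  calc (2 * t + 1) * log (1 + 1 / t) ≤ (2 * t + 1) * (1 / t) := by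
        gcongr
        linarith [log_le_sub_one_of_pos (by positivity : 0 < 1 + 1 / t)]
    _ = 2 + 1 / t := by field_simp

theorem q_deriv_pos_general (a : ℝ) (h1 : 3 < a) :
    0 < deriv (fun x : ℝ => 3 * x - 9 - (x - 1) * (x - 2) * Real.log (1 + 1 / (x - 2))) a := by
  change 0 < deriv q a
  rw [(hasDerivAt_q (by linarith) (by linarith)).deriv]
  have hbound := mul_log_one_add_inv_le (by linarith : 0 < a - 2)
  have hinv : 1 / (a - 2) < 1 := by rw [div_lt_one (by linarith)]; linarith
  linarith

theorem q_deriv_pos (a : ℝ) (h1 : 3 < a) (h2 : a ≤ 3.7) :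
    0 < deriv (fun x : ℝ => 3 * x - 9 - (x - 1) * (x - 2) * Real.log (1 + 1 / (x - 2))) a :=
  q_deriv_pos_general a h1
end

section
/- For every real a with 3 < a ≤ 3.7, the expression 29 + 8a(a-4) - (a-2)·log(1 + 1/(a-2)) is strictly positive. -/
open Real

lemma mul_log_one_add_inv_le_one {x : ℝ} (hx : 0 < x) : x * log (1 + 1 / x) ≤ 1 :=
  calc x * log (1 + 1 / x) ≤ x * (1 / x) := by
        gcongr
        linarith [log_le_sub_one_of_pos (by positivity : 0 < 1 + 1 / x)]
    _ = 1 := by field_simp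

-- With the logarithmic term at most 1, the expression is at least 8 (a - 1) (a - 3) + 4.
theorem denom_pos_general (a : ℝ) (h1 : 3 < a) :
    0 < 29 + 8 * a * (a - 4) - (a - 2) * Real.log (1 + 1 / (a - 2)) := by
  have hlog := mul_log_one_add_inv_le_one (by linarith : 0 < a - 2)
  have hquad : 0 < (a - 1) * (a - 3) := mul_pos (by linarith) (by linarith)
  linarith

theorem denom_pos (a : ℝ) (h1 : 3 < a) (h2 : a ≤ 3.7) :
    0 < 29 + 8 * a * (a - 4) - (a - 2) * Real.log (1 + 1 / (a - 2)) :=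
  denom_pos_general a h1
end

section
/- Let s > 0 and n ≥ 1 be reals. If g: [α, β] → ℝ is piecewise linear with g(α) = g(β) = 0, g has exactly one discontinuity γ in (α, β) which is a positive jump, g is decreasing with slope between -T and -s on each linear piece (for some T ≥ s), and on [α, γ) the function satisfies g(x) ≥ g(γ⁺) - s(γ - x) whenever the slope after γ exceeds -s - n somewhere (strict admissibility condition at a Γ₂ point), then ∫_α^β |g(x)| dx ≥ (β - α)² · s(n + s) / (2(n + 2s)). -/
/-!
On `[α, γ]` the function starts at `0` and falls with slope at most `-s`, so `|g x| ≥ s (x - α)`.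
The positive jump at `γ` makes the conclusion of the Γ₂ condition fail (letting `x → γ⁻` would
give `g(γ⁺) ≤ g γ`), so its hypothesis fails too: every slope on `(γ, β)` is at most `-(s + n)`,
and since `g β = 0` this gives `g x ≥ (s + n) (β - x)` there. Integrating the two triangles,
`∫ |g| ≥ s a² / 2 + (s + n) b² / 2` with `a + b = β - α`, and minimising over the split point
gives the bound.
-/

open Set Filter Topology MeasureTheory intervalIntegral

theorem add_sq_mul_le (p q a b : ℝ) :
    (a + b) ^ 2 * (p * q) ≤ (p * a ^ 2 + q * b ^ 2) * (p + q) := by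
  nlinarith [sq_nonneg (p * a - q * b)]

section RightSlope

variable {g : ℝ → ℝ} {a b C : ℝ}

theorem le_add_mul_sub_of_hasDerivWithinAt_Ioi_le (hab : a ≤ b) (hc : ContinuousOn g (Icc a b))
    (hd : ∀ x ∈ Ico a b, ∃ sl, HasDerivWithinAt g sl (Ioi x) x ∧ sl ≤ C) :
    g b ≤ g a + C * (b - a) := by
  have hB : ∀ x, HasDerivAt (fun x => g a + C * (x - a)) C x := fun x => by
    simpa using (((hasDerivAt_id x).sub_const a).const_mul C).const_add (g a)
  refine image_le_of_liminf_slope_right_le_deriv_boundary hc (B' := fun _ => C) (by simp)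
    (fun x _ => (hB x).continuousAt.continuousWithinAt) (fun x _ => (hB x).hasDerivWithinAt)
    ?_ (right_mem_Icc.2 hab)
  intro x hx r hr
  obtain ⟨sl, hsl, hle⟩ := hd x hx
  exact (hasDerivWithinAt_Ioi_iff_Ici.1 hsl).liminf_right_slope_le (hle.trans_lt hr)

theorem le_add_mul_sub_of_hasDerivWithinAt_Ioi_le_of_Ioc (hc : ContinuousOn g (Ioc a b))
    (hd : ∀ x ∈ Ioo a b, ∃ sl, HasDerivWithinAt g sl (Ioi x) x ∧ sl ≤ C)
    {x y : ℝ} (hx : x ∈ Ioc a b) (hxy : x ≤ y) (hy : y ≤ b) :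
    g y ≤ g x + C * (y - x) :=
  le_add_mul_sub_of_hasDerivWithinAt_Ioi_le hxy
    (hc.mono fun _ hz => ⟨hx.1.trans_le hz.1, hz.2.trans hy⟩)
    fun z hz => hd z ⟨hx.1.trans_le hz.1, hz.2.trans_le hy⟩

theorem mul_sub_le_neg_of_hasDerivWithinAt_Ioi_le (hga : g a = 0)
    (hc : ContinuousOn g (Icc a b))
    (hd : ∀ x ∈ Ico a b, ∃ sl, HasDerivWithinAt g sl (Ioi x) x ∧ sl ≤ -C)
    {x : ℝ} (hx : x ∈ Icc a b) : C * (x - a) ≤ -g x := by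
  have := le_add_mul_sub_of_hasDerivWithinAt_Ioi_le hx.1 (hc.mono (Icc_subset_Icc_right hx.2))
    fun y hy => hd y ⟨hy.1, hy.2.trans_le hx.2⟩
  linarith

theorem mul_sub_le_of_hasDerivWithinAt_Ioi_le (hgb : g b = 0) (hc : ContinuousOn g (Ioc a b))
    (hd : ∀ x ∈ Ioo a b, ∃ sl, HasDerivWithinAt g sl (Ioi x) x ∧ sl ≤ -C)
    {x : ℝ} (hx : x ∈ Ioc a b) : C * (b - x) ≤ g x := by
  have := le_add_mul_sub_of_hasDerivWithinAt_Ioi_le_of_Ioc hc hd hx hx.2 le_rfl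
  linarith

theorem le_of_tendsto_nhdsGT_of_hasDerivWithinAt_Ioi_nonpos {p : ℝ}
    (hc : ContinuousOn g (Ioc a b)) (hlim : Tendsto g (𝓝[>] a) (𝓝 p))
    (hd : ∀ x ∈ Ioo a b, ∃ sl, HasDerivWithinAt g sl (Ioi x) x ∧ sl ≤ 0)
    {x : ℝ} (hx : x ∈ Ioc a b) : g x ≤ p := by
  refine ge_of_tendsto hlim ?_
  filter_upwards [Ioo_mem_nhdsGT hx.1] with y hy
  simpa using le_add_mul_sub_of_hasDerivWithinAt_Ioi_le_of_Ioc hc hd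
    ⟨hy.1, hy.2.le.trans hx.2⟩ hy.2.le hx.2

end RightSlope

theorem intervalIntegrable_of_continuousOn_Ioc_of_abs_le {f : ℝ → ℝ} {a b M : ℝ} (hab : a ≤ b)
    (hc : ContinuousOn f (Ioc a b)) (hM : ∀ x ∈ Ioc a b, |f x| ≤ M) :
    IntervalIntegrable f volume a b := by
  rw [intervalIntegrable_iff_integrableOn_Ioc_of_le hab]
  exact IntegrableOn.of_bound measure_Ioc_lt_top (hc.aestronglyMeasurable measurableSet_Ioc) M
    ((ae_restrict_iff' measurableSet_Ioc).2 (Eventually.of_forall hM))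

theorem mul_sq_div_two_le_integral_of_mul_sub_le {f : ℝ → ℝ} {a b c : ℝ} (hab : a ≤ b)
    (hf : IntervalIntegrable f volume a b) (h : ∀ x ∈ Ioo a b, c * (x - a) ≤ f x) :
    c * (b - a) ^ 2 / 2 ≤ ∫ x in a..b, f x := by
  have hlin : ∫ x in a..b, c * (x - a) = c * (b - a) ^ 2 / 2 := by
    rw [intervalIntegral.integral_const_mul,
      integral_sub intervalIntegrable_id intervalIntegrable_const]
    simp only [integral_id, intervalIntegral.integral_const, smul_eq_mul]
    ring
  rw [← hlin]
  exact integral_mono_on_of_le_Ioo hab (Continuous.intervalIntegrable (by fun_prop) _ _) hf h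

theorem mul_sq_div_two_le_integral_of_mul_sub_le' {f : ℝ → ℝ} {a b c : ℝ} (hab : a ≤ b)
    (hf : IntervalIntegrable f volume a b) (h : ∀ x ∈ Ioo a b, c * (b - x) ≤ f x) :
    c * (b - a) ^ 2 / 2 ≤ ∫ x in a..b, f x := by
  have hlin : ∫ x in a..b, c * (b - x) = c * (b - a) ^ 2 / 2 := by
    rw [intervalIntegral.integral_const_mul,
      integral_sub intervalIntegrable_const intervalIntegrable_id]
    simp only [intervalIntegral.integral_const, smul_eq_mul, integral_id]
    ring
  rw [← hlin]
  exact integral_mono_on_of_le_Ioo hab (Continuous.intervalIntegrable (by fun_prop) _ _) hf h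

section Triangles

variable {g : ℝ → ℝ} {a b C : ℝ}

theorem mul_sq_div_two_le_integral_abs_of_left (hab : a ≤ b) (hga : g a = 0)
    (hc : ContinuousOn g (Icc a b))
    (hd : ∀ x ∈ Ico a b, ∃ sl, HasDerivWithinAt g sl (Ioi x) x ∧ sl ≤ -C) :
    C * (b - a) ^ 2 / 2 ≤ ∫ x in a..b, |g x| :=
  mul_sq_div_two_le_integral_of_mul_sub_le hab (hc.abs.intervalIntegrable_of_Icc hab) fun _ hx =>
    (mul_sub_le_neg_of_hasDerivWithinAt_Ioi_le hga hc hd (Ioo_subset_Icc_self hx)).trans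
      (neg_le_abs _)

theorem intervalIntegrable_abs_of_tendsto_nhdsGT {p : ℝ} (hab : a ≤ b) (hC : 0 ≤ C)
    (hgb : g b = 0) (hc : ContinuousOn g (Ioc a b)) (hlim : Tendsto g (𝓝[>] a) (𝓝 p))
    (hd : ∀ x ∈ Ioo a b, ∃ sl, HasDerivWithinAt g sl (Ioi x) x ∧ sl ≤ -C) :
    IntervalIntegrable (fun x => |g x|) volume a b := by
  refine intervalIntegrable_of_continuousOn_Ioc_of_abs_le (M := p) hab hc.abs fun x hx => ?_
  have hg0 : 0 ≤ g x :=
    (mul_nonneg hC (sub_nonneg.2 hx.2)).trans (mul_sub_le_of_hasDerivWithinAt_Ioi_le hgb hc hd hx)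
  have hgp : g x ≤ p := le_of_tendsto_nhdsGT_of_hasDerivWithinAt_Ioi_nonpos hc hlim
    (fun y hy => (hd y hy).imp fun _ h => ⟨h.1, h.2.trans (neg_nonpos.2 hC)⟩) hx
  rw [abs_abs, abs_le]
  exact ⟨by linarith, hgp⟩

theorem mul_sq_div_two_le_integral_abs_of_right (hab : a ≤ b) (hgb : g b = 0)
    (hint : IntervalIntegrable (fun x => |g x|) volume a b) (hc : ContinuousOn g (Ioc a b))
    (hd : ∀ x ∈ Ioo a b, ∃ sl, HasDerivWithinAt g sl (Ioi x) x ∧ sl ≤ -C) :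
    C * (b - a) ^ 2 / 2 ≤ ∫ x in a..b, |g x| :=
  mul_sq_div_two_le_integral_of_mul_sub_le' hab hint fun _ hx =>
    (mul_sub_le_of_hasDerivWithinAt_Ioi_le hgb hc hd (Ioo_subset_Ioc_self hx)).trans
      (le_abs_self _)

end Triangles

theorem q2_interval_bound_general (s n T α β γ : ℝ) (hs : 0 < s) (hn : 1 ≤ n)
    (g : ℝ → ℝ) (gp : ℝ) (hαγ : α < γ) (hγβ : γ < β)
    (hgα : g α = 0) (hgβ : g β = 0)
    -- g is continuous on the two pieces (left-continuous, positive jump at γ)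
    (hcont1 : ContinuousOn g (Set.Icc α γ))
    (hcont2 : ContinuousOn g (Set.Ioc γ β))
    (hjump : Filter.Tendsto g (nhdsWithin γ (Set.Ioi γ)) (nhds gp))
    (hjump_pos : g γ < gp)
    -- piecewise linear with slopes between -T and -s off the jump point
    (hslope : ∀ x ∈ Set.Ico α β, x ≠ γ →
      ∃ sl : ℝ, HasDerivWithinAt g sl (Set.Ioi x) x ∧ -T ≤ sl ∧ sl ≤ -s)
    -- strict admissibility (Γ₂) condition at γ
    (hΓ2 : (∃ xb ∈ Set.Ioo γ β, ∃ sl : ℝ,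
        HasDerivWithinAt g sl (Set.Ioi xb) xb ∧ -s - n < sl) →
      ∀ x ∈ Set.Ico α γ, gp - s * (γ - x) ≤ g x) :
    (β - α) ^ 2 * (s * (n + s)) / (2 * (n + 2 * s)) ≤ ∫ x in α..β, |g x| := by
  have hconcl_false : ¬ ∀ x ∈ Ico α γ, gp - s * (γ - x) ≤ g x := fun h =>
    hjump_pos.not_ge <| by
      simpa using ContinuousWithinAt.closure_le (by simp [closure_Ico hαγ.ne, hαγ.le])
        (by fun_prop) ((hcont1 γ (right_mem_Icc.2 hαγ.le)).mono Ico_subset_Icc_self) h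
  have hsteep : ∀ y ∈ Ioo γ β, ∃ sl, HasDerivWithinAt g sl (Ioi y) y ∧ sl ≤ -(s + n) := by
    intro y hy
    obtain ⟨sl, hsl, -, -⟩ := hslope y ⟨hαγ.le.trans hy.1.le, hy.2⟩ hy.1.ne'
    exact ⟨sl, hsl, by_contra fun hlt => hconcl_false (hΓ2 ⟨y, hy, sl, hsl, by linarith⟩)⟩
  have I₁ := mul_sq_div_two_le_integral_abs_of_left hαγ.le hgα hcont1 fun y hy =>
    (hslope y ⟨hy.1, hy.2.trans hγβ⟩ hy.2.ne).imp fun _ h => ⟨h.1, h.2.2⟩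
  have hint₂ := intervalIntegrable_abs_of_tendsto_nhdsGT hγβ.le (by positivity) hgβ hcont2
    hjump hsteep
  have I₂ := mul_sq_div_two_le_integral_abs_of_right hγβ.le hgβ hint₂ hcont2 hsteep
  rw [← integral_add_adjacent_intervals (hcont1.abs.intervalIntegrable_of_Icc hαγ.le) hint₂,
    div_le_iff₀ (by positivity)]
  nlinarith [add_sq_mul_le s (s + n) (γ - α) (β - γ)]

/-- Lemma 4 (Q₂-type interval estimate). -/
theorem q2_interval_bound (s n T α β γ : ℝ) (hs : 0 < s) (hn : 1 ≤ n) (hT : s ≤ T)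
    (g : ℝ → ℝ) (gp : ℝ) (hαγ : α < γ) (hγβ : γ < β)
    (hgα : g α = 0) (hgβ : g β = 0)
    -- g is continuous on the two pieces (left-continuous, positive jump at γ)
    (hcont1 : ContinuousOn g (Set.Icc α γ))
    (hcont2 : ContinuousOn g (Set.Ioc γ β))
    (hjump : Filter.Tendsto g (nhdsWithin γ (Set.Ioi γ)) (nhds gp))
    (hjump_pos : g γ < gp)
    -- piecewise linear with slopes between -T and -s off the jump point
    (hslope : ∀ x ∈ Set.Ico α β, x ≠ γ →
      ∃ sl : ℝ, HasDerivWithinAt g sl (Set.Ioi x) x ∧ -T ≤ sl ∧ sl ≤ -s)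
    -- strict admissibility (Γ₂) condition at γ
    (hΓ2 : (∃ xb ∈ Set.Ioo γ β, ∃ sl : ℝ,
        HasDerivWithinAt g sl (Set.Ioi xb) xb ∧ -s - n < sl) →
      ∀ x ∈ Set.Ico α γ, gp - s * (γ - x) ≤ g x) :
    (β - α) ^ 2 * (s * (n + s)) / (2 * (n + 2 * s)) ≤ ∫ x in α..β, |g x| :=
  q2_interval_bound_general s n T α β γ hs hn g gp hαγ hγβ hgα hgβ hcont1 hcont2 hjump hjump_pos
    hslope hΓ2
end

section
/- For all a with 3 < a ≤ 3.7 and any M > 0, the quadratic p(χ) = (a-2)(1 - M(a-2)χ)²/(2(3 + (a-2)log(1 + 1/(a-2)))) + M(a-2)χ(4 - Mχ)/16 is increasing on the interval [M⁻¹/(a - 1/2), M⁻¹/(a - 3/2)], and hence its minimum over that interval is attained at χ = M⁻¹/(a - 1/2). -/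
/-!
In `b = a - 2` and `D = 3 + b log (1 + 1/b)`, `p` is a quadratic in `χ` with leading coefficient
`b M² (8b² - D) / (16 D) ≥ 0`, so it increases to the right of its critical point. That this
critical point lies left of `M⁻¹ / (a - 1/2)` is equivalent to
`3 (b - 1) ≤ b (b + 1) log (1 + 1/b)`, which follows from the first four terms of the series of `log (1 + 1/b) = -log (1 - 1/(b + 1))`;
three terms are not enough near `b = 1.7`.
-/

open Finset Real Set

theorem sum_range_pow_div_le_neg_log_one_sub {x : ℝ} (h0 : 0 ≤ x) (h1 : x < 1) (n : ℕ) :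
    ∑ i ∈ range n, x ^ (i + 1) / (i + 1) ≤ -log (1 - x) :=
  sum_le_hasSum _ (fun i _ => by positivity)
    (hasSum_pow_div_log_of_abs_lt_one (by rwa [abs_of_nonneg h0]))

theorem three_mul_sub_one_le_mul_log {b : ℝ} (h1 : 1 < b) (h2 : b ≤ 1.7) :
    3 * (b - 1) ≤ b * (b + 1) * log (1 + 1 / b) := by
  have hb : 0 < b := by linarith
  have hseries := sum_range_pow_div_le_neg_log_one_sub (x := 1 / (b + 1)) (by positivity)
    (by rw [div_lt_one (by linarith)]; linarith) 4
  rw [show 1 - 1 / (b + 1) = (1 + 1 / b)⁻¹ by field_simp; ring, log_inv, neg_neg] at hseries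
  have hsum : b * (b + 1) * ∑ i ∈ range 4, (1 / (b + 1)) ^ (i + 1) / (i + 1) =
      b * (12 * (b + 1) ^ 3 + 6 * (b + 1) ^ 2 + 4 * (b + 1) + 3) / (12 * (b + 1) ^ 3) := by
    have : b + 1 ≠ 0 := by positivity
    simp only [sum_range_succ, sum_range_zero]
    push_cast
    field_simp
    ring
  have hpoly : 36 * (b - 1) * (b + 1) ^ 3 ≤
      b * (12 * (b + 1) ^ 3 + 6 * (b + 1) ^ 2 + 4 * (b + 1) + 3) := by
    nlinarith [mul_nonneg (sub_nonneg.2 h1.le) (sub_nonneg.2 h2)]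
  calc 3 * (b - 1) ≤ b * (b + 1) * ∑ i ∈ range 4, (1 / (b + 1)) ^ (i + 1) / (i + 1) := by
        rw [hsum, le_div_iff₀ (by positivity)]
        linarith
    _ ≤ b * (b + 1) * log (1 + 1 / b) := by gcongr

theorem monotoneOn_quadratic_Ici {α β γ l : ℝ} (hα : 0 ≤ α) (hl : 0 ≤ 2 * α * l + β) :
    MonotoneOn (fun x => α * x ^ 2 + β * x + γ) (Ici l) := by
  intro x hx y hy hxy
  have hfactor : α * y ^ 2 + β * y + γ - (α * x ^ 2 + β * x + γ) =
      (y - x) * (α * (x + y) + β) := by ring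
  have : 0 ≤ (y - x) * (α * (x + y) + β) :=
    mul_nonneg (sub_nonneg.2 hxy) (by nlinarith [mem_Ici.1 hx, mem_Ici.1 hy])
  simp only
  linarith

/-- `hcrit` says that the critical point `(8b - 2D) / (M (8b² - D))` is at most
`2 / (M (2b + 3))`. -/
theorem monotoneOn_Ici_of_critical_le {M b D l : ℝ} (hM : 0 < M) (hb : 0 < b) (hD : 0 < D)
    (hDb : D ≤ 8 * b ^ 2) (hcrit : 6 * b ≤ D * (b + 1)) (hl : 2 ≤ M * l * (2 * b + 3)) :
    MonotoneOn (fun χ => b * (1 - M * b * χ) ^ 2 / (2 * D) + M * b * (χ * (4 - M * χ)) / 16)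
      (Ici l) := by
  have hquad : (fun χ => b * (1 - M * b * χ) ^ 2 / (2 * D) + M * b * (χ * (4 - M * χ)) / 16) =
      fun χ => b * M ^ 2 * (8 * b ^ 2 - D) / (16 * D) * χ ^ 2 + b * M * (D - 4 * b) / (4 * D) * χ
        + b / (2 * D) := by
    funext χ
    field_simp
    ring
  rw [hquad]
  have hα : 0 ≤ 8 * b ^ 2 - D := sub_nonneg.2 hDb
  apply monotoneOn_quadratic_Ici (by positivity)
  have hvertex : 0 ≤ (8 * b ^ 2 - D) * (M * l) + 2 * (D - 4 * b) := by
    nlinarith [mul_le_mul_of_nonneg_left hl hα]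
  calc (0 : ℝ) ≤ b * M / (8 * D) * ((8 * b ^ 2 - D) * (M * l) + 2 * (D - 4 * b)) :=
        mul_nonneg (by positivity) hvertex
    _ = _ := by field_simp; ring

theorem p_monotone_on_interval (a M : ℝ) (hM : 0 < M) (h1 : 3 < a) (h2 : a ≤ 3.7) :
    MonotoneOn
      (fun χ : ℝ =>
        (a - 2) * (1 - M * (a - 2) * χ) ^ 2 /
            (2 * (3 + (a - 2) * Real.log (1 + 1 / (a - 2)))) +
          M * (a - 2) * (χ * (4 - M * χ)) / 16)
      (Set.Icc (M⁻¹ / (a - 1 / 2)) (M⁻¹ / (a - 3 / 2))) ∧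
    ∀ χ ∈ Set.Icc (M⁻¹ / (a - 1 / 2)) (M⁻¹ / (a - 3 / 2)),
      (a - 2) * (1 - M * (a - 2) * (M⁻¹ / (a - 1 / 2))) ^ 2 /
          (2 * (3 + (a - 2) * Real.log (1 + 1 / (a - 2)))) +
        M * (a - 2) * ((M⁻¹ / (a - 1 / 2)) * (4 - M * (M⁻¹ / (a - 1 / 2)))) / 16 ≤
      (a - 2) * (1 - M * (a - 2) * χ) ^ 2 /
          (2 * (3 + (a - 2) * Real.log (1 + 1 / (a - 2)))) +
        M * (a - 2) * (χ * (4 - M * χ)) / 16 := by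
  have hb : 1 < a - 2 := by linarith
  have hlog_nonneg : 0 ≤ log (1 + 1 / (a - 2)) :=
    log_nonneg (le_add_of_nonneg_right (by positivity))
  have hlog_le : (a - 2) * log (1 + 1 / (a - 2)) ≤ 1 := by
    have := log_le_sub_one_of_pos (x := 1 + 1 / (a - 2)) (by positivity)
    calc _ ≤ (a - 2) * (1 / (a - 2)) := by gcongr; linarith
      _ = 1 := by field_simp
  have hcrit := three_mul_sub_one_le_mul_log hb (by linarith)
  have hl : 2 = M * (M⁻¹ / (a - 1 / 2)) * (2 * (a - 2) + 3) := by
    have : 2 * a - 1 ≠ 0 := by linarith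
    field_simp
    ring
  have hmono : MonotoneOn _ (Ici (M⁻¹ / (a - 1 / 2))) :=
    monotoneOn_Ici_of_critical_le (b := a - 2) (D := 3 + (a - 2) * log (1 + 1 / (a - 2))) hM
      (by linarith) (by positivity) (by nlinarith) (by nlinarith) hl.le
  exact ⟨hmono.mono Icc_subset_Ici_self,
    fun χ hχ => hmono self_mem_Ici (Icc_subset_Ici_self hχ) hχ.1⟩
end

section
/- There exists a real a in (3, 3.7] (namely a ≈ 3.62079) such that (1/(2 log a)) · (a-2)·(12a + 9 + (a-2)(4a-3)·log(1 + 1/(a-2))) / (16·(a - 1/2)²·(3 + (a-2)·log(1 + 1/(a-2)))) > 0.065664679. -/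
/-!
Take `a = 3.6208`. As a function of `log a` and of `L = log (1 + 1 / (a - 2))` the expression is
decreasing in both, so upper bounds for the two logarithms, obtained from partial sums of the
exponential series, suffice; they must be sharp to about `10⁻⁷`, since the value at `a` exceeds
`0.065664679` only by about `6 * 10⁻¹⁰`.
-/

open Real Finset

namespace Real

theorem log_lt_of_lt_sum_range_pow_div_factorial {x y : ℝ} (hx : 0 ≤ x) (hy : 0 < y) (n : ℕ)
    (h : y < ∑ i ∈ range n, x ^ i / i.factorial) : log y < x :=
  (log_lt_iff_lt_exp hy).2 (h.trans_le (sum_le_exp_of_nonneg hx n))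

end Real

theorem div_add_mul_antitone {p q r s x y : ℝ} (hr : 0 < r) (hs : 0 ≤ s) (hx : 0 ≤ x)
    (hxy : x ≤ y) (hqr : q * r ≤ p * s) :
    (p + q * y) / (r + s * y) ≤ (p + q * x) / (r + s * x) := by
  rw [div_le_div_iff₀ (add_pos_of_pos_of_nonneg hr (mul_nonneg hs (hx.trans hxy)))
    (add_pos_of_pos_of_nonneg hr (mul_nonneg hs hx))]
  nlinarith [mul_nonneg (sub_nonneg.2 hqr) (sub_nonneg.2 hxy)]

noncomputable def discrepancyBound (a ℓ L : ℝ) : ℝ :=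
  1 / (2 * ℓ) *
    ((a - 2) * (12 * a + 9 + (a - 2) * (4 * a - 3) * L) /
      (16 * (a - 1 / 2) ^ 2 * (3 + (a - 2) * L)))

theorem discrepancyBound_le {a ℓ ℓ' L L' : ℝ} (ha : 2 < a) (hℓ : 0 < ℓ) (hℓℓ' : ℓ ≤ ℓ')
    (hL : 0 ≤ L) (hLL' : L ≤ L') : discrepancyBound a ℓ' L' ≤ discrepancyBound a ℓ L := by
  have hratio : ∀ M, (a - 2) * (12 * a + 9 + (a - 2) * (4 * a - 3) * M) /
      (16 * (a - 1 / 2) ^ 2 * (3 + (a - 2) * M)) =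
      (a - 2) / (16 * (a - 1 / 2) ^ 2) *
        ((12 * a + 9 + (a - 2) * (4 * a - 3) * M) / (3 + (a - 2) * M)) :=
    fun M => mul_div_mul_comm _ _ _ _
  have hnum : 0 ≤ 12 * a + 9 + (a - 2) * (4 * a - 3) * L' := by
    have : 0 ≤ (a - 2) * (4 * a - 3) := by nlinarith
    nlinarith [mul_nonneg this (hL.trans hLL')]
  -- `(4a - 3) * 3 - (12a + 9) = -18`, so the ratio decreases in `L`.
  have hmono := div_add_mul_antitone (p := 12 * a + 9) (q := (a - 2) * (4 * a - 3))
    (by norm_num : (0 : ℝ) < 3) (sub_pos.2 ha).le hL hLL' (by nlinarith)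
  unfold discrepancyBound
  rw [hratio, hratio]
  gcongr
  have hden : 0 < 3 + (a - 2) * L' := by nlinarith
  exact mul_nonneg (div_nonneg (by linarith) (by positivity)) (div_nonneg hnum hden.le)

theorem numerical_optimum :
    ∃ a : ℝ, 3 < a ∧ a ≤ 3.7 ∧
      0.065664679 <
        1 / (2 * Real.log a) *
          ((a - 2) * (12 * a + 9 + (a - 2) * (4 * a - 3) * Real.log (1 + 1 / (a - 2))) /
            (16 * (a - 1 / 2) ^ 2 * (3 + (a - 2) * Real.log (1 + 1 / (a - 2))))) := by
  refine ⟨3.6208, by norm_num, by norm_num, ?_⟩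
  have hlog_a : log 3.6208 < 1.286695 :=
    log_lt_of_lt_sum_range_pow_div_factorial (by norm_num) (by norm_num) 16
      (by norm_num [sum_range_succ, Nat.factorial])
  have hlog_ratio : log (1 + 1 / (3.6208 - 2)) < 0.4805598 :=
    log_lt_of_lt_sum_range_pow_div_factorial (by norm_num) (by norm_num) 16
      (by norm_num [sum_range_succ, Nat.factorial])
  calc (0.065664679 : ℝ) < discrepancyBound 3.6208 1.286695 0.4805598 := by
        norm_num [discrepancyBound]
    _ ≤ discrepancyBound 3.6208 (log 3.6208) (log (1 + 1 / (3.6208 - 2))) :=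
        discrepancyBound_le (by norm_num) (log_pos (by norm_num)) hlog_a.le
          (log_nonneg (by norm_num)) hlog_ratio.le
end

section
/- Let f: [0,1] → ℝ be left-continuous and piecewise linear with only positive jump discontinuities, f(0) = f(1) = 0, and suppose f has two successive discontinuities at a₁ < a₂ with f continuous and piecewise linear on (a₁, a₂). If f > 0 on all of (a₁, a₂) or f < 0 on all of (a₁, a₂), then f does not minimize ∫₀¹|f| among all functions satisfying the same structural constraints; in particular, a minimizer f*_strict of the absolute integral over strictly admissible functions has a zero strictly between any two successive discontinuities. -/
/-!
If `f` keeps one sign on `(a₁, a₂)`, moving it towards zero by a small `δ` on `(a₁, a₂]` keeps it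
admissible, as `δ` stays below the upward jumps at `a₁` and `a₂`. Since `f` falls with slope at
most `-σ` on `(a₁, a₂)`, `|f| ≥ δ` on the two thirds of that interval away from the end where `f`
may approach zero, so the move lowers `∫ |f|` by at least `δ (a₂ - a₁) / 3`. A minimizer therefore
changes sign on `(a₁, a₂)`, where it is continuous, and vanishes there.

The slope bounds enter through one real-induction principle: a left-continuous function whose
right difference quotients have nonnegative lower limits is monotone. It makes `f x + σ x`
antitone on `(a₁, a₂]`, and `f x + T x` monotone on `[0, 1]` (the jumps go up), which gives
integrability.
-/

/-- Structural constraints of (strictly) admissible functions: vanishing at 0 and 1,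
left-continuity, finitely many discontinuities all of which are positive jumps, and
slopes (right derivatives off the jump set) between `-T` and `-σ`. -/
def Admissible (T σ : ℝ) (f : ℝ → ℝ) : Prop :=
  f 0 = 0 ∧ f 1 = 0 ∧
  (∀ x ∈ Set.Ioc (0 : ℝ) 1, Filter.Tendsto f (nhdsWithin x (Set.Iio x)) (nhds (f x))) ∧
  ∃ J : Finset ℝ, (↑J : Set ℝ) ⊆ Set.Ioo (0 : ℝ) 1 ∧
    (∀ x ∈ Set.Ioo (0 : ℝ) 1, x ∉ J → ContinuousAt f x) ∧
    (∀ γ ∈ J, ∃ gp : ℝ,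
      Filter.Tendsto f (nhdsWithin γ (Set.Ioi γ)) (nhds gp) ∧ f γ < gp) ∧
    (∀ x ∈ Set.Ico (0 : ℝ) 1, x ∉ J →
      ∃ sl : ℝ, HasDerivWithinAt f sl (Set.Ioi x) x ∧ -T ≤ sl ∧ sl ≤ -σ)

open Set Filter MeasureTheory Topology

theorem IsPreconnected.forall_pos_or_forall_neg {α : Type*} [TopologicalSpace α] {s : Set α}
    (hs : IsPreconnected s) {f : α → ℝ} (hf : ContinuousOn f s) (h0 : ∀ x ∈ s, f x ≠ 0) :
    (∀ x ∈ s, 0 < f x) ∨ ∀ x ∈ s, f x < 0 := by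
  by_contra! ⟨⟨x, hx, hfx⟩, y, hy, hfy⟩
  obtain ⟨z, hz, hfz⟩ := hs.intermediate_value hx hy hf ⟨hfx, hfy⟩
  exact h0 z hz hfz

theorem HasDerivWithinAt.eventually_lt_slope {h : ℝ → ℝ} {d r x : ℝ}
    (hd : HasDerivWithinAt h d (Ioi x) x) (hr : r < d) : ∀ᶠ y in 𝓝[>] x, r < slope h x y :=
  ((hasDerivWithinAt_iff_tendsto_slope' self_notMem_Ioi).1 hd).eventually (lt_mem_nhds hr)

theorem monotoneOn_Icc_of_liminf_slope_right_nonneg {h : ℝ → ℝ} {a b : ℝ}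
    (hleft : ∀ x ∈ Ioc a b, ContinuousWithinAt h (Iio x) x)
    (hright : ∀ x ∈ Ico a b, ∀ r < 0, ∀ᶠ y in 𝓝[>] x, r < slope h x y) :
    MonotoneOn h (Icc a b) := by
  intro x hx y hy hxy
  suffices key : ∀ r < 0, h x + r * (y - x) ≤ h y by
    have hlim : Tendsto (fun r => h x + r * (y - x)) (𝓝[<] 0) (𝓝 (h x)) := by
      have : Continuous fun r : ℝ => h x + r * (y - x) := by fun_prop
      simpa using (this.tendsto 0).mono_left nhdsWithin_le_nhds
    exact le_of_tendsto hlim (eventually_nhdsWithin_of_forall key)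
  intro r hr
  set S := {t | t ∈ Icc x y ∧ h x + r * (t - x) ≤ h t}
  have hxS : x ∈ S := ⟨⟨le_rfl, hxy⟩, by simp⟩
  have hS : IsLUB S (sSup S) := isLUB_csSup ⟨x, hxS⟩ ⟨y, fun t ht => ht.1.2⟩
  have hxs : x ≤ sSup S := hS.1 hxS
  have hsy : sSup S ≤ y := hS.2 fun t ht => ht.1.2
  -- left continuity closes `S` at its supremum
  have hsS : sSup S ∈ S := by
    refine ⟨⟨hxs, hsy⟩, ?_⟩
    rcases hxs.eq_or_lt with hxs | hxs
    · simp [← hxs]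
    have hcont : ContinuousWithinAt (fun t => h t - r * (t - x)) (Iic (sSup S)) (sSup S) :=
      (continuousWithinAt_Iio_iff_Iic.1 (hleft _ ⟨hx.1.trans_lt hxs, hsy.trans hy.2⟩)).sub
        (by fun_prop)
    have : h x ≤ h (sSup S) - r * (sSup S - x) := ge_of_tendsto_of_frequently hcont <|
      (hS.frequently_mem ⟨x, hxS⟩).mono fun t ht => show h x ≤ h t - r * (t - x) by linarith [ht.2]
    linarith
  rcases hsy.eq_or_lt with hsy | hsy
  · exact hsy ▸ hsS.2
  obtain ⟨u, hu, hus⟩ :=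
    ((hright _ ⟨hx.1.trans hxs, hsy.trans_le hy.2⟩ r hr).and (Ioc_mem_nhdsGT hsy)).exists
  rw [slope_def_field, lt_div_iff₀ (sub_pos.2 hus.1)] at hu
  have huS : u ∈ S := ⟨⟨hxs.trans hus.1.le, hus.2⟩, by nlinarith [hsS.2]⟩
  exact absurd (hS.1 huS) (not_le.2 hus.1)

theorem indicator_Ioc_eventuallyEq_nhds {a b c x : ℝ} (ha : x ≠ a) (hb : x ≠ b) :
    (Ioc a b).indicator (fun _ => c) =ᶠ[𝓝 x] fun _ => (Ioc a b).indicator (fun _ => c) x := by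
  by_cases hx : x ∈ Ioo a b
  · filter_upwards [isOpen_Ioo.mem_nhds hx] with y hy
    rw [indicator_of_mem (Ioo_subset_Ioc_self hy), indicator_of_mem (Ioo_subset_Ioc_self hx)]
  · have hx' : x ∉ Icc a b := fun h => hx ⟨h.1.lt_of_ne' ha, h.2.lt_of_ne hb⟩
    filter_upwards [isClosed_Icc.isOpen_compl.mem_nhds hx'] with y hy
    rw [indicator_of_notMem fun h => hy (Ioc_subset_Icc_self h),
      indicator_of_notMem fun h => hx' (Ioc_subset_Icc_self h)]

theorem indicator_Ioc_eventuallyEq_nhdsLT {a b c x : ℝ} :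
    (Ioc a b).indicator (fun _ => c) =ᶠ[𝓝[<] x] fun _ => (Ioc a b).indicator (fun _ => c) x := by
  rcases le_or_gt x a with hxa | hax
  · filter_upwards [self_mem_nhdsWithin] with y hy
    rw [indicator_of_notMem fun h => h.1.not_ge (le_of_lt hy |>.trans hxa),
      indicator_of_notMem fun h => h.1.not_ge hxa]
  rcases le_or_gt x b with hxb | hbx
  · filter_upwards [Ioo_mem_nhdsLT hax] with y hy
    rw [indicator_of_mem (show y ∈ Ioc a b from ⟨hy.1, hy.2.le.trans hxb⟩),
      indicator_of_mem (show x ∈ Ioc a b from ⟨hax, hxb⟩)]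
  · filter_upwards [Ioo_mem_nhdsLT hbx] with y hy
    rw [indicator_of_notMem fun h => hy.1.not_ge h.2, indicator_of_notMem fun h => hbx.not_ge h.2]

theorem integral_indicator_Ioc {g : ℝ → ℝ} {a b c d : ℝ} (hca : c ≤ a) (hab : a ≤ b)
    (hbd : b ≤ d) : ∫ x in c..d, (Ioc a b).indicator g x = ∫ x in a..b, g x := by
  rw [intervalIntegral.integral_of_le (hca.trans hab |>.trans hbd),
    intervalIntegral.integral_of_le hab, integral_indicator measurableSet_Ioc,
    Measure.restrict_restrict measurableSet_Ioc, inter_eq_left.2 (Ioc_subset_Ioc hca hbd)]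

theorem integral_abs_add_indicator_Ioc {f : ℝ → ℝ} {a b δ : ℝ}
    (hf : IntervalIntegrable f volume 0 1) (ha : 0 ≤ a) (hab : a ≤ b) (hb : b ≤ 1) :
    ∫ x in (0 : ℝ)..1, |f x + (Ioc a b).indicator (fun _ => δ) x| =
      (∫ x in (0 : ℝ)..1, |f x|) + ∫ x in a..b, (|f x + δ| - |f x|) := by
  have hind : IntervalIntegrable ((Ioc a b).indicator fun _ => δ) volume 0 1 :=
    (intervalIntegrable_iff_integrableOn_Ioc_of_le zero_le_one).2
      ((integrableOn_const (by simp)).indicator measurableSet_Ioc)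
  have hdiff : (fun x => |f x + (Ioc a b).indicator (fun _ => δ) x| - |f x|) =
      (Ioc a b).indicator fun x => |f x + δ| - |f x| := by
    ext x
    by_cases hx : x ∈ Ioc a b <;> simp [hx]
  rw [← integral_indicator_Ioc ha hab hb, ← hdiff,
    intervalIntegral.integral_sub (hf.add hind).abs hf.abs]
  ring

theorem intervalIntegral_neg_of_le_of_le {φ : ℝ → ℝ} {a m b c d : ℝ} (ham : a ≤ m) (hmb : m ≤ b)
    (hφ : IntervalIntegrable φ volume a b) (h₁ : ∀ x ∈ Ioo a m, φ x ≤ c)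
    (h₂ : ∀ x ∈ Ioo m b, φ x ≤ d) (h : c * (m - a) + d * (b - m) < 0) :
    ∫ x in a..b, φ x < 0 := by
  have hφ₁ : IntervalIntegrable φ volume a m :=
    hφ.mono_set (uIcc_subset_uIcc_left (mem_uIcc_of_le ham hmb))
  have hφ₂ : IntervalIntegrable φ volume m b :=
    hφ.mono_set (uIcc_subset_uIcc_right (mem_uIcc_of_le ham hmb))
  have e₁ := intervalIntegral.integral_mono_on_of_le_Ioo ham hφ₁ intervalIntegrable_const h₁
  have e₂ := intervalIntegral.integral_mono_on_of_le_Ioo hmb hφ₂ intervalIntegrable_const h₂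
  rw [← intervalIntegral.integral_add_adjacent_intervals hφ₁ hφ₂]
  simp only [intervalIntegral.integral_const, smul_eq_mul] at e₁ e₂
  linarith

namespace Admissible

variable {T σ : ℝ} {f : ℝ → ℝ} {a₁ a₂ : ℝ}

theorem exists_tendsto_nhdsGT_gt (hf : Admissible T σ f) {x : ℝ} (hx : x ∈ Ioo 0 1)
    (hd : ¬ContinuousAt f x) : ∃ gp, Tendsto f (𝓝[>] x) (𝓝 gp) ∧ f x < gp := by
  obtain ⟨-, -, -, J, -, hcont, hjump, -⟩ := hf
  exact hjump x (by_contra fun hxJ => hd (hcont x hx hxJ))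

theorem exists_hasDerivWithinAt (hf : Admissible T σ f) {x : ℝ} (hx : x ∈ Ioo 0 1)
    (hc : ContinuousAt f x) : ∃ sl, HasDerivWithinAt f sl (Ioi x) x ∧ -T ≤ sl ∧ sl ≤ -σ := by
  obtain ⟨-, -, -, J, -, -, hjump, hslope⟩ := hf
  refine hslope x (Ioo_subset_Ico_self hx) fun hxJ => ?_
  obtain ⟨gp, hgp, hlt⟩ := hjump x hxJ
  exact hlt.ne (tendsto_nhds_unique hc.continuousWithinAt hgp)

theorem monotoneOn_add_mul (hf : Admissible T σ f) :
    MonotoneOn (fun x => f x + T * x) (Icc 0 1) := by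
  obtain ⟨-, -, hleft, J, -, -, hjump, hslope⟩ := hf
  refine monotoneOn_Icc_of_liminf_slope_right_nonneg
    (fun x hx => ContinuousWithinAt.add (hleft x hx) (by fun_prop)) fun x hx r hr => ?_
  by_cases hxJ : x ∈ J
  · obtain ⟨gp, hgp, hlt⟩ := hjump x hxJ
    have hlim : Tendsto (fun y => f y + T * y) (𝓝[>] x) (𝓝 (gp + T * x)) :=
      hgp.add ((continuous_const_mul T).tendsto x |>.mono_left nhdsWithin_le_nhds)
    filter_upwards [hlim.eventually (lt_mem_nhds (add_lt_add_left hlt (T * x))),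
      self_mem_nhdsWithin] with y hy hxy
    rw [slope_def_field]
    exact hr.trans (div_pos (sub_pos.2 hy) (sub_pos.2 hxy))
  · obtain ⟨sl, hsl, hTsl, -⟩ := hslope x hx hxJ
    exact (hsl.add ((hasDerivAt_id x).const_mul T).hasDerivWithinAt).eventually_lt_slope
      (by linarith)

theorem intervalIntegrable (hf : Admissible T σ f) {a b : ℝ} (ha : a ∈ Icc 0 1)
    (hb : b ∈ Icc 0 1) : IntervalIntegrable f volume a b := by
  have hmono : IntervalIntegrable (fun x => f x + T * x) volume a b :=
    (hf.monotoneOn_add_mul.mono (uIcc_subset_Icc ha hb)).intervalIntegrable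
  simpa using hmono.sub ((continuous_const_mul T).intervalIntegrable a b)

theorem antitoneOn_add_mul (hf : Admissible T σ f) {a b : ℝ} (ha : 0 ≤ a) (hb : b ≤ 1)
    (hcont : ∀ x ∈ Ioo a b, ContinuousAt f x) :
    AntitoneOn (fun x => f x + σ * x) (Ioc a b) := by
  intro x hx y hy hxy
  suffices MonotoneOn (fun t => -(f t + σ * t)) (Icc x b) from
    neg_le_neg_iff.1 (this ⟨le_rfl, hx.2⟩ ⟨hxy, hy.2⟩ hxy)
  refine monotoneOn_Icc_of_liminf_slope_right_nonneg (fun t ht => ?_) fun t ht r hr => ?_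
  · exact (ContinuousWithinAt.add (hf.2.2.1 t ⟨ha.trans_lt (hx.1.trans_le ht.1.le), ht.2.trans hb⟩)
      (by fun_prop)).neg
  · have ht' : t ∈ Ioo a b := ⟨hx.1.trans_le ht.1, ht.2⟩
    obtain ⟨sl, hsl, -, hslσ⟩ :=
      hf.exists_hasDerivWithinAt ⟨ha.trans_lt ht'.1, ht'.2.trans_le hb⟩ (hcont t ht')
    exact (hsl.add ((hasDerivAt_id t).const_mul σ).hasDerivWithinAt).neg.eventually_lt_slope
      (by linarith)

theorem add_indicator_Ioc (hf : Admissible T σ f) (h0a₁ : 0 < a₁) (ha₁a₂ : a₁ < a₂)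
    (ha₂1 : a₂ < 1) (hd₁ : ¬ContinuousAt f a₁) (hd₂ : ¬ContinuousAt f a₂) {gp₁ gp₂ δ : ℝ}
    (hgp₁ : Tendsto f (𝓝[>] a₁) (𝓝 gp₁)) (hgp₂ : Tendsto f (𝓝[>] a₂) (𝓝 gp₂))
    (h₁ : f a₁ < gp₁ + δ) (h₂ : f a₂ + δ < gp₂) :
    Admissible T σ fun x => f x + (Ioc a₁ a₂).indicator (fun _ => δ) x := by
  obtain ⟨hf0, hf1, hleft, J, hJ, hcont, hjump, hslope⟩ := hf
  set φ := (Ioc a₁ a₂).indicator fun _ : ℝ => δ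
  have hJ₁ : a₁ ∈ J := by_contra fun h => hd₁ (hcont a₁ ⟨h0a₁, ha₁a₂.trans ha₂1⟩ h)
  have hJ₂ : a₂ ∈ J := by_contra fun h => hd₂ (hcont a₂ ⟨h0a₁.trans ha₁a₂, ha₂1⟩ h)
  have hloc : ∀ x ∉ J, φ =ᶠ[𝓝 x] fun _ => φ x := fun x hx =>
    indicator_Ioc_eventuallyEq_nhds (ne_of_mem_of_not_mem hJ₁ hx).symm
      (ne_of_mem_of_not_mem hJ₂ hx).symm
  refine ⟨?_, ?_, fun x hx => (hleft x hx).add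
      (continuousWithinAt_const.congr_of_eventuallyEq indicator_Ioc_eventuallyEq_nhdsLT rfl),
    J, hJ, fun x hx hxJ => (hcont x hx hxJ).add (hloc x hxJ).continuousAt,
    fun γ hγ => ?_, fun x hx hxJ => ?_⟩
  · simp [φ, hf0, indicator_of_notMem fun h : (0 : ℝ) ∈ Ioc a₁ a₂ => h0a₁.not_gt h.1]
  · simp [φ, hf1, indicator_of_notMem fun h : (1 : ℝ) ∈ Ioc a₁ a₂ => ha₂1.not_ge h.2]
  · rcases eq_or_ne γ a₁ with rfl | hγ₁
    · have : φ =ᶠ[𝓝[>] γ] fun _ => δ := by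
        filter_upwards [Ioo_mem_nhdsGT ha₁a₂] with y hy
        exact indicator_of_mem (Ioo_subset_Ioc_self hy) _
      exact ⟨gp₁ + δ, hgp₁.add this.tendsto, by simpa [φ] using h₁⟩
    rcases eq_or_ne γ a₂ with rfl | hγ₂
    · have : φ =ᶠ[𝓝[>] γ] fun _ => 0 := by
        filter_upwards [self_mem_nhdsWithin] with y hy
        exact indicator_of_notMem (fun h => h.2.not_gt hy) _
      exact ⟨gp₂ + 0, hgp₂.add this.tendsto, by simpa [φ, ha₁a₂] using h₂⟩
    obtain ⟨gp, hgp, hlt⟩ := hjump γ hγ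
    exact ⟨gp + φ γ, hgp.add ((indicator_Ioc_eventuallyEq_nhds hγ₁ hγ₂).filter_mono
      nhdsWithin_le_nhds).tendsto, add_lt_add_left hlt _⟩
  · obtain ⟨sl, hsl, hTsl, hslσ⟩ := hslope x hx hxJ
    have hφ : HasDerivAt φ 0 x := (hasDerivAt_const x (φ x)).congr_of_eventuallyEq (hloc x hxJ)
    refine ⟨sl, ?_, hTsl, hslσ⟩
    have := hsl.add hφ.hasDerivWithinAt
    rwa [add_zero] at this

theorem exists_integral_abs_lt (hf : Admissible T σ f) (h0a₁ : 0 < a₁) (ha₁a₂ : a₁ < a₂)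
    (ha₂1 : a₂ < 1) (hd₁ : ¬ContinuousAt f a₁) (hd₂ : ¬ContinuousAt f a₂) {gp₁ gp₂ δ : ℝ}
    (hgp₁ : Tendsto f (𝓝[>] a₁) (𝓝 gp₁)) (hgp₂ : Tendsto f (𝓝[>] a₂) (𝓝 gp₂))
    (h₁ : f a₁ < gp₁ + δ) (h₂ : f a₂ + δ < gp₂)
    (hint : ∫ x in a₁..a₂, (|f x + δ| - |f x|) < 0) :
    ∃ g, Admissible T σ g ∧ ∫ x in (0 : ℝ)..1, |g x| < ∫ x in (0 : ℝ)..1, |f x| := by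
  refine ⟨_, hf.add_indicator_Ioc h0a₁ ha₁a₂ ha₂1 hd₁ hd₂ hgp₁ hgp₂ h₁ h₂, ?_⟩
  rw [integral_abs_add_indicator_Ioc (hf.intervalIntegrable (left_mem_Icc.2 zero_le_one)
    (right_mem_Icc.2 zero_le_one)) h0a₁.le ha₁a₂.le ha₂1.le]
  linarith

theorem exists_integral_abs_lt_of_pos (hf : Admissible T σ f) (hσ : 0 < σ) (h0a₁ : 0 < a₁)
    (ha₁a₂ : a₁ < a₂) (ha₂1 : a₂ < 1) (hd₁ : ¬ContinuousAt f a₁) (hd₂ : ¬ContinuousAt f a₂)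
    (hsucc : ∀ x ∈ Ioo a₁ a₂, ContinuousAt f x) (hpos : ∀ x ∈ Ioo a₁ a₂, 0 < f x) :
    ∃ g, Admissible T σ g ∧ ∫ x in (0 : ℝ)..1, |g x| < ∫ x in (0 : ℝ)..1, |f x| := by
  obtain ⟨gp₁, hgp₁, hj₁⟩ := hf.exists_tendsto_nhdsGT_gt ⟨h0a₁, ha₁a₂.trans ha₂1⟩ hd₁
  obtain ⟨gp₂, hgp₂, hj₂⟩ := hf.exists_tendsto_nhdsGT_gt ⟨h0a₁.trans ha₁a₂, ha₂1⟩ hd₂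
  obtain ⟨δ, hδ, hδm⟩ := exists_between (lt_min (by positivity : 0 < σ * (a₂ - a₁) / 3)
    (sub_pos.2 hj₁))
  have hδσ := hδm.trans_le (min_le_left _ _)
  have hδj := hδm.trans_le (min_le_right _ _)
  have hfa₂ : 0 ≤ f a₂ := ge_of_tendsto (hf.2.2.1 a₂ ⟨h0a₁.trans ha₁a₂, ha₂1.le⟩) <| by
    filter_upwards [Ioo_mem_nhdsLT ha₁a₂] with y hy using (hpos y hy).le
  have hlow : ∀ x ∈ Ioc a₁ a₂, σ * (a₂ - x) ≤ f x := fun x hx => by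
    have := hf.antitoneOn_add_mul h0a₁.le ha₂1.le hsucc hx (right_mem_Ioc.2 ha₁a₂) hx.2
    dsimp only at this
    linarith
  have hfab := hf.intervalIntegrable ⟨h0a₁.le, (ha₁a₂.trans ha₂1).le⟩
    ⟨(h0a₁.trans ha₁a₂).le, ha₂1.le⟩
  refine hf.exists_integral_abs_lt h0a₁ ha₁a₂ ha₂1 hd₁ hd₂ hgp₁ hgp₂ (δ := -δ) (by linarith)
    (by linarith) <| intervalIntegral_neg_of_le_of_le (m := (a₁ + 2 * a₂) / 3) (c := -δ) (d := δ)
      (by linarith) (by linarith) ((hfab.add intervalIntegrable_const).abs.sub hfab.abs)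
      (fun x hx => ?_) (fun x hx => ?_) (by nlinarith)
  · have := hlow x ⟨hx.1, by linarith [hx.2]⟩
    rw [abs_of_nonneg (by nlinarith [hx.2]), abs_of_pos (hpos x ⟨hx.1, by linarith [hx.2]⟩)]
    linarith
  · have := abs_add_le (f x) (-δ)
    rw [abs_neg, abs_of_pos hδ] at this
    linarith

theorem exists_integral_abs_lt_of_neg (hf : Admissible T σ f) (hσ : 0 < σ) (h0a₁ : 0 < a₁)
    (ha₁a₂ : a₁ < a₂) (ha₂1 : a₂ < 1) (hd₁ : ¬ContinuousAt f a₁) (hd₂ : ¬ContinuousAt f a₂)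
    (hsucc : ∀ x ∈ Ioo a₁ a₂, ContinuousAt f x) (hneg : ∀ x ∈ Ioo a₁ a₂, f x < 0) :
    ∃ g, Admissible T σ g ∧ ∫ x in (0 : ℝ)..1, |g x| < ∫ x in (0 : ℝ)..1, |f x| := by
  obtain ⟨gp₁, hgp₁, hj₁⟩ := hf.exists_tendsto_nhdsGT_gt ⟨h0a₁, ha₁a₂.trans ha₂1⟩ hd₁
  obtain ⟨gp₂, hgp₂, hj₂⟩ := hf.exists_tendsto_nhdsGT_gt ⟨h0a₁.trans ha₁a₂, ha₂1⟩ hd₂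
  obtain ⟨δ, hδ, hδm⟩ := exists_between (lt_min (by positivity : 0 < σ * (a₂ - a₁) / 3)
    (sub_pos.2 hj₂))
  have hδσ := hδm.trans_le (min_le_left _ _)
  have hδj := hδm.trans_le (min_le_right _ _)
  have hgp₁0 : gp₁ ≤ 0 := le_of_tendsto hgp₁ <| by
    filter_upwards [Ioo_mem_nhdsGT ha₁a₂] with y hy using (hneg y hy).le
  have hup : ∀ x ∈ Ioc a₁ a₂, f x ≤ gp₁ - σ * (x - a₁) := fun x hx => by
    have hlim : Tendsto (fun y => f y + σ * y) (𝓝[>] a₁) (𝓝 (gp₁ + σ * a₁)) :=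
      hgp₁.add ((continuous_const_mul σ).tendsto a₁ |>.mono_left nhdsWithin_le_nhds)
    have := ge_of_tendsto hlim <| by
      filter_upwards [Ioc_mem_nhdsGT hx.1] with y hy using
        hf.antitoneOn_add_mul h0a₁.le ha₂1.le hsucc ⟨hy.1, hy.2.trans hx.2⟩ hx hy.2
    linarith
  have hfab := hf.intervalIntegrable ⟨h0a₁.le, (ha₁a₂.trans ha₂1).le⟩
    ⟨(h0a₁.trans ha₁a₂).le, ha₂1.le⟩
  refine hf.exists_integral_abs_lt h0a₁ ha₁a₂ ha₂1 hd₁ hd₂ hgp₁ hgp₂ (δ := δ) (by linarith)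
    (by linarith) <| intervalIntegral_neg_of_le_of_le (m := (2 * a₁ + a₂) / 3) (c := δ) (d := -δ)
      (by linarith) (by linarith) ((hfab.add intervalIntegrable_const).abs.sub hfab.abs)
      (fun x hx => ?_) (fun x hx => ?_) (by nlinarith)
  · have := abs_add_le (f x) δ
    rw [abs_of_pos hδ] at this
    linarith
  · have := hup x ⟨by linarith [hx.1], hx.2.le⟩
    rw [abs_of_nonpos (by nlinarith [hx.1]), abs_of_neg (hneg x ⟨by linarith [hx.1], hx.2⟩)]
    linarith

end Admissible

theorem zero_between_jumps_general (T σ : ℝ) (hσ : 0 < σ)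
    (f : ℝ → ℝ) (hf : Admissible T σ f)
    (a₁ a₂ : ℝ) (h0a₁ : 0 < a₁) (ha₁a₂ : a₁ < a₂) (ha₂1 : a₂ < 1)
    (hd₁ : ¬ ContinuousAt f a₁) (hd₂ : ¬ ContinuousAt f a₂)
    (hsucc : ∀ x ∈ Set.Ioo a₁ a₂, ContinuousAt f x) :
    (((∀ x ∈ Set.Ioo a₁ a₂, 0 < f x) ∨ (∀ x ∈ Set.Ioo a₁ a₂, f x < 0)) →
      ∃ g : ℝ → ℝ, Admissible T σ g ∧
        (∫ x in (0:ℝ)..1, |g x|) < ∫ x in (0:ℝ)..1, |f x|) ∧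
    ((∀ g : ℝ → ℝ, Admissible T σ g →
        (∫ x in (0:ℝ)..1, |f x|) ≤ ∫ x in (0:ℝ)..1, |g x|) →
      ∃ z ∈ Set.Ioo a₁ a₂, f z = 0) := by
  have hbetter : ((∀ x ∈ Ioo a₁ a₂, 0 < f x) ∨ ∀ x ∈ Ioo a₁ a₂, f x < 0) →
      ∃ g, Admissible T σ g ∧ ∫ x in (0 : ℝ)..1, |g x| < ∫ x in (0 : ℝ)..1, |f x| := by
    rintro (hpos | hneg)
    · exact hf.exists_integral_abs_lt_of_pos hσ h0a₁ ha₁a₂ ha₂1 hd₁ hd₂ hsucc hpos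
    · exact hf.exists_integral_abs_lt_of_neg hσ h0a₁ ha₁a₂ ha₂1 hd₁ hd₂ hsucc hneg
  refine ⟨hbetter, fun hmin => ?_⟩
  by_contra! hzero
  obtain ⟨g, hg, hlt⟩ := hbetter <| isPreconnected_Ioo.forall_pos_or_forall_neg
    (fun x hx => (hsucc x hx).continuousWithinAt) hzero
  exact (hmin g hg).not_gt hlt

/-- Lemma 2: between two successive discontinuities of a minimizer there is a zero;
equivalently, a function of constant sign between two successive discontinuities
does not minimize the absolute integral. -/
theorem zero_between_jumps (T σ : ℝ) (hσ : 0 < σ) (hT : σ ≤ T)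
    (f : ℝ → ℝ) (hf : Admissible T σ f)
    (a₁ a₂ : ℝ) (h0a₁ : 0 < a₁) (ha₁a₂ : a₁ < a₂) (ha₂1 : a₂ < 1)
    (hd₁ : ¬ ContinuousAt f a₁) (hd₂ : ¬ ContinuousAt f a₂)
    (hsucc : ∀ x ∈ Set.Ioo a₁ a₂, ContinuousAt f x) :
    (((∀ x ∈ Set.Ioo a₁ a₂, 0 < f x) ∨ (∀ x ∈ Set.Ioo a₁ a₂, f x < 0)) →
      ∃ g : ℝ → ℝ, Admissible T σ g ∧
        (∫ x in (0:ℝ)..1, |g x|) < ∫ x in (0:ℝ)..1, |f x|) ∧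
    ((∀ g : ℝ → ℝ, Admissible T σ g →
        (∫ x in (0:ℝ)..1, |f x|) ≤ ∫ x in (0:ℝ)..1, |g x|) →
      ∃ z ∈ Set.Ioo a₁ a₂, f z = 0) :=
  zero_between_jumps_general T σ hσ f hf a₁ a₂ h0a₁ ha₁a₂ ha₂1 hd₁ hd₂ hsucc
end

section
/- In the setting of the preceding lemma, with j = aᵗ - a^{t-1} + k and x̄ ∈ (x_j, x_{r_j}) a point where the slope s(x̄) of f satisfies s(x̄) > -a^{t-1}(a-2) - k, any index n̄₂ ∈ A₂ maximizing D_n(x̄) over A₂ satisfies n̄₂ < j. -/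
theorem Nat.cast_pow_sub_pow_pred {R : Type*} [CommRing R] {a t : ℕ} (ha : 1 ≤ a) (ht : t ≠ 0) :
    ((a ^ t - a ^ (t - 1) : ℕ) : R) = (a : R) ^ (t - 1) * ((a : R) - 1) := by
  have hle : a ^ (t - 1) ≤ a ^ t := Nat.pow_le_pow_right ha (Nat.sub_le t 1)
  rw [Nat.cast_sub hle, Nat.cast_pow, Nat.cast_pow, ← pow_sub_one_mul ht]
  ring

theorem maximizer_lt_j_general (a t : ℕ) (ha : 3 ≤ a) (ht : 1 ≤ t)
    (k j : ℕ)
    (hj : j = a ^ t - a ^ (t - 1) + k)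
    (n2 : ℕ)
    (n0 : ℕ) (hn0 : n0 ∈ Finset.Icc 1 (a ^ (t - 1)))
    -- the slope of f at x̄ equals n̄₀ - n̄₂ and exceeds s₀ - k
    (hslope : -((a : ℝ) ^ (t - 1) * ((a : ℝ) - 2)) - k < (n0 : ℝ) - (n2 : ℝ)) :
    n2 < j := by
  have hn0_le : (n0 : ℝ) ≤ (a : ℝ) ^ (t - 1) := by exact_mod_cast (Finset.mem_Icc.mp hn0).2
  have hj_eq : (j : ℝ) = (a : ℝ) ^ (t - 1) * ((a : ℝ) - 1) + k := by
    rw [hj, Nat.cast_add, Nat.cast_pow_sub_pow_pred (by omega) (by omega)]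
  have : (n2 : ℝ) < j := by
    calc (n2 : ℝ) < n0 + (a : ℝ) ^ (t - 1) * ((a : ℝ) - 2) + k := by linarith
      _ ≤ (a : ℝ) ^ (t - 1) * ((a : ℝ) - 1) + k := by linarith
      _ = j := hj_eq.symm
  exact_mod_cast this

/-- The maximizing index over A₂ at x̄ is smaller than j. -/
theorem maximizer_lt_j (a t : ℕ) (ha : 3 ≤ a) (ht : 1 ≤ t)
    (x : ℕ → ℝ) (hx : ∀ i ∈ Finset.Icc 1 (a ^ t), x i ∈ Set.Ico (0 : ℝ) 1)
    (D : ℕ → ℝ → ℝ)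
    (hD : ∀ n y, D n y =
      (((Finset.Icc 1 n).filter (fun i => x i < y)).card : ℝ) - n * y)
    (k j : ℕ) (hk1 : 1 ≤ k) (hk2 : k < a ^ (t - 1))
    (hj : j = a ^ t - a ^ (t - 1) + k)
    (xb : ℝ)
    (n2 : ℕ) (hn2 : n2 ∈ Finset.Icc (a ^ t - a ^ (t - 1) + 1) (a ^ t))
    (hn2max : ∀ m ∈ Finset.Icc (a ^ t - a ^ (t - 1) + 1) (a ^ t), D m xb ≤ D n2 xb)
    (n0 : ℕ) (hn0 : n0 ∈ Finset.Icc 1 (a ^ (t - 1)))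
    (hn0max : ∀ m ∈ Finset.Icc 1 (a ^ (t - 1)), D m xb ≤ D n0 xb)
    -- the slope of f at x̄ equals n̄₀ - n̄₂ and exceeds s₀ - k
    (hslope : -((a : ℝ) ^ (t - 1) * ((a : ℝ) - 2)) - k < (n0 : ℝ) - (n2 : ℝ)) :
    n2 < j :=
  maximizer_lt_j_general a t ha ht k j hj n2 n0 hn0 hslope
end

section
/- Let g: [c, d] → ℝ be continuous and piecewise linear with exactly one bend at y ∈ (c, d), with slope s₁ on [c, y] and slope s₂ on [y, d], where s₁ > s₂ (slope decreases), both slopes negative, and g > 0 on [c, d]. Define g̃ on [c, d] by swapping the order of the two linear pieces: g̃ has slope s₂ on [c, c + (d - y)] and slope s₁ on [c + (d - y), d], with g̃(c) = g(c). Then g̃(d) = g(d) and ∫_c^d g̃(x) dx < ∫_c^d g(x) dx. -/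
/-!
The integral of a function made of two affine pieces of lengths `L₁, L₂` and slopes `p, q`,
starting from the value `v`, is `v (L₁ + L₂) + p L₁² / 2 + q L₂² / 2 + p L₁ L₂`: only the cross
term `p L₁ L₂` depends on the order of the pieces. Swapping them therefore changes the integral
by `(s₁ - s₂)(y - c)(d - y) > 0`, and leaves the total rise `s₁ L₁ + s₂ L₂` unchanged.
-/

open MeasureTheory Set

lemma intervalIntegral_eq_of_affineOn {f : ℝ → ℝ} {a b m : ℝ} (hab : a ≤ b)
    (hf : ∀ x ∈ Icc a b, f x = f a + m * (x - a)) :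
    ∫ x in a..b, f x = f a * (b - a) + m * (b - a) ^ 2 / 2 := by
  rw [intervalIntegral.integral_congr (g := fun x => f a + m * (x - a))
    (fun x hx => hf x (by rwa [uIcc_of_le hab] at hx))]
  rw [intervalIntegral.integral_comp_sub_right (fun x => f a + m * x),
    intervalIntegral.integral_add intervalIntegrable_const
      (intervalIntegral.intervalIntegrable_id.const_mul m),
    intervalIntegral.integral_const, intervalIntegral.integral_const_mul, integral_id, smul_eq_mul]
  ring

lemma intervalIntegrable_of_affineOn {f : ℝ → ℝ} {a b m : ℝ} (hab : a ≤ b)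
    (hf : ∀ x ∈ Icc a b, f x = f a + m * (x - a)) :
    IntervalIntegrable f volume a b := by
  rw [intervalIntegrable_iff_integrableOn_Icc_of_le hab]
  exact (continuous_const.add (continuous_const.mul (continuous_id.sub continuous_const)))
    |>.integrableOn_Icc.congr_fun (fun x hx => (hf x hx).symm) measurableSet_Icc

section TwoPieces

variable {f : ℝ → ℝ} {a b e p q : ℝ} (hab : a ≤ b) (hbe : b ≤ e)
  (hp : ∀ x ∈ Icc a b, f x = f a + p * (x - a)) (hq : ∀ x ∈ Icc b e, f x = f b + q * (x - b))
include hab hbe hp hq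

lemma apply_right_of_twoAffinePieces : f e = f a + p * (b - a) + q * (e - b) := by
  rw [hq e ⟨hbe, le_rfl⟩, hp b ⟨hab, le_rfl⟩]

lemma intervalIntegral_eq_of_twoAffinePieces :
    ∫ x in a..e, f x =
      f a * (e - a) + p * (b - a) ^ 2 / 2 + q * (e - b) ^ 2 / 2 + p * (b - a) * (e - b) := by
  rw [← intervalIntegral.integral_add_adjacent_intervals (intervalIntegrable_of_affineOn hab hp)
      (intervalIntegrable_of_affineOn hbe hq), intervalIntegral_eq_of_affineOn hab hp,
    intervalIntegral_eq_of_affineOn hbe hq, hp b ⟨hab, le_rfl⟩]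
  ring

end TwoPieces

theorem swap_pieces_general (c d y s1 s2 : ℝ) (hcy : c < y) (hyd : y < d)
    (hs12 : s2 < s1)
    (g gt : ℝ → ℝ)
    (hg1 : ∀ x ∈ Set.Icc c y, g x = g c + s1 * (x - c))
    (hg2 : ∀ x ∈ Set.Icc y d, g x = g y + s2 * (x - y))
    (hgt0 : gt c = g c)
    (hgt1 : ∀ x ∈ Set.Icc c (c + (d - y)), gt x = gt c + s2 * (x - c))
    (hgt2 : ∀ x ∈ Set.Icc (c + (d - y)) d,
      gt x = gt (c + (d - y)) + s1 * (x - (c + (d - y)))) :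
    gt d = g d ∧ (∫ x in c..d, gt x) < ∫ x in c..d, g x := by
  have hcm : c ≤ c + (d - y) := by linarith
  have hmd : c + (d - y) ≤ d := by linarith
  constructor
  · rw [apply_right_of_twoAffinePieces hcm hmd hgt1 hgt2,
      apply_right_of_twoAffinePieces hcy.le hyd.le hg1 hg2, hgt0]
    ring
  · have hdiff : (∫ x in c..d, g x) - ∫ x in c..d, gt x = (s1 - s2) * ((y - c) * (d - y)) := by
      rw [intervalIntegral_eq_of_twoAffinePieces hcy.le hyd.le hg1 hg2,
        intervalIntegral_eq_of_twoAffinePieces hcm hmd hgt1 hgt2, hgt0]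
      ring
    have hpos : 0 < (s1 - s2) * ((y - c) * (d - y)) :=
      mul_pos (sub_pos.2 hs12) (mul_pos (sub_pos.2 hcy) (sub_pos.2 hyd))
    linarith

/-- Piece-swapping argument: putting the steeper of two adjacent linear pieces first
strictly decreases the integral of a positive piecewise-linear function while
preserving the endpoint values. -/
theorem swap_pieces (c d y s1 s2 : ℝ) (hcy : c < y) (hyd : y < d)
    (hs1 : s1 < 0) (hs2 : s2 < 0) (hs12 : s2 < s1)
    (g gt : ℝ → ℝ)
    (hg1 : ∀ x ∈ Set.Icc c y, g x = g c + s1 * (x - c))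
    (hg2 : ∀ x ∈ Set.Icc y d, g x = g y + s2 * (x - y))
    (hgt0 : gt c = g c)
    (hgt1 : ∀ x ∈ Set.Icc c (c + (d - y)), gt x = gt c + s2 * (x - c))
    (hgt2 : ∀ x ∈ Set.Icc (c + (d - y)) d,
      gt x = gt (c + (d - y)) + s1 * (x - (c + (d - y))))
    (hpos : ∀ x ∈ Set.Icc c d, 0 < g x) :
    gt d = g d ∧ (∫ x in c..d, gt x) < ∫ x in c..d, g x :=
  swap_pieces_general c d y s1 s2 hcy hyd hs12 g gt hg1 hg2 hgt0 hgt1 hgt2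
end

section
/- For all a with 3 ≤ a ≤ 3.7 and positive integers m and s with s = ⌈(a-2)m⌉ ≥ 1, the quantity (1/2)·(3m - 1 + s·∑_{n=s+1}^{s+m-1} 1/n) is at most (m/2)·(3 + (a-2)·log(1 + 1/(a-2))). -/
/-!
Write `c = a - 2`, so that `c * m ≤ s ≤ c * m + 1`. Comparing `1 / n` with `log n - log (n - 1)`,
the harmonic sum over `(s, s + m)` is at most `log (1 + m / s) ≤ log (1 + 1 / c)`. Hence
`s * ∑ ≤ (c * m + 1) * log (1 + 1 / c) ≤ c * m * log (1 + 1 / c) + 1`, since `log (1 + 1 / c) ≤ 1 / c ≤ 1`,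
and the `+ 1` is absorbed by the `- 1` on the left.
-/

open Finset Real

theorem one_div_succ_le_log_succ_sub_log {x : ℝ} (hx : 0 < x) :
    1 / (x + 1) ≤ log (x + 1) - log x := by
  have h := one_sub_inv_le_log_of_pos (div_pos (by linarith) hx : 0 < (x + 1) / x)
  rw [log_div (by linarith) hx.ne', inv_div] at h
  calc 1 / (x + 1) = 1 - x / (x + 1) := by field_simp; ring
    _ ≤ _ := h

theorem sum_Ioc_one_div_le_log_sub_log {s : ℕ} (hs : 0 < s) {t : ℕ} (hst : s ≤ t) :
    ∑ n ∈ Ioc s t, (1 : ℝ) / n ≤ log t - log s := by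
  induction t, hst using Nat.le_induction with
  | base => simp
  | succ t hst ih =>
    rw [sum_Ioc_succ_top (by omega), Nat.cast_succ]
    have := one_div_succ_le_log_succ_sub_log (x := (t : ℝ)) (by norm_cast; omega)
    linarith

theorem sum_Icc_one_div_le_log_one_add_inv {c : ℝ} (hc : 0 < c) {m s : ℕ} (hs : 0 < s)
    (hcm : c * m ≤ s) :
    ∑ n ∈ Icc (s + 1) (s + m - 1), (1 : ℝ) / n ≤ log (1 + 1 / c) := by
  have hs' : (0 : ℝ) < s := by exact_mod_cast hs
  calc ∑ n ∈ Icc (s + 1) (s + m - 1), (1 : ℝ) / n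
      ≤ ∑ n ∈ Ioc s (s + m), (1 : ℝ) / n :=
        sum_le_sum_of_subset_of_nonneg (fun n hn => by simp only [mem_Icc, mem_Ioc] at *; omega)
          (fun _ _ _ => by positivity)
    _ ≤ log (s + m : ℕ) - log s := sum_Ioc_one_div_le_log_sub_log hs (by omega)
    _ = log (1 + m / s) := by
        rw [← log_div (by positivity) hs'.ne']
        push_cast
        congr 1
        field_simp
    _ ≤ log (1 + 1 / c) := by
        gcongr log (1 + ?_)
        rw [div_le_div_iff₀ hs' hc]
        linarith

theorem denominator_bound_general (a : ℝ) (ha1 : 3 ≤ a)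
    (m s : ℕ) (hs : 1 ≤ s) (hsm : s = ⌈(a - 2) * m⌉₊) :
    (1 / 2 : ℝ) * (3 * m - 1 + s * ∑ n ∈ Finset.Icc (s + 1) (s + m - 1), (1 : ℝ) / n) ≤
      (m / 2 : ℝ) * (3 + (a - 2) * Real.log (1 + 1 / (a - 2))) := by
  set c := a - 2
  have hc : 1 ≤ c := by linarith
  have hcm : c * m ≤ s := hsm ▸ Nat.le_ceil _
  have hsc : (s : ℝ) ≤ c * m + 1 := hsm ▸ (Nat.ceil_lt_add_one (by positivity)).le
  have hlog_nonneg : 0 ≤ log (1 + 1 / c) := log_nonneg (le_add_of_nonneg_right (by positivity))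
  have hlog_le_one : log (1 + 1 / c) ≤ 1 := by
    have := log_le_sub_one_of_pos (by positivity : 0 < 1 + 1 / c)
    have : 1 / c ≤ 1 := (div_le_one (by linarith)).2 hc
    linarith
  have hsum := sum_Icc_one_div_le_log_one_add_inv (by linarith) (m := m) hs hcm
  have key : (s : ℝ) * ∑ n ∈ Icc (s + 1) (s + m - 1), (1 : ℝ) / n ≤ c * m * log (1 + 1 / c) + 1 :=
    calc (s : ℝ) * ∑ n ∈ Icc (s + 1) (s + m - 1), (1 : ℝ) / n
        ≤ (c * m + 1) * log (1 + 1 / c) := by gcongr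
      _ ≤ c * m * log (1 + 1 / c) + 1 := by nlinarith
  linarith

theorem denominator_bound (a : ℝ) (ha1 : 3 ≤ a) (ha2 : a ≤ 3.7)
    (m s : ℕ) (hm : 1 ≤ m) (hs : 1 ≤ s) (hsm : s = ⌈(a - 2) * m⌉₊) :
    (1 / 2 : ℝ) * (3 * m - 1 + s * ∑ n ∈ Finset.Icc (s + 1) (s + m - 1), (1 : ℝ) / n) ≤
      (m / 2 : ℝ) * (3 + (a - 2) * Real.log (1 + 1 / (a - 2))) :=
  denominator_bound_general a ha1 m s hs hsm
end
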